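/- Let μ be a probability measure on ℝ with finite second moment whose support contains at least two points. Define F(t,y) = ∫_ℝ exp(uy − u²t/2) μ(du), G(t,y) = (∫_ℝ u exp(uy − u²t/2) μ(du))/F(t,y), and H(t,y) = (∫_ℝ u² exp(uy − u²t/2) μ(du))/F(t,y) − G(t,y)². Then on the strip (0,∞) × ℝ: (i) H(t,y) = ∂_y G(t,y); (ii) H(t,y) > 0; and (iii) G satisfies the backwards Burgers equation ∂_t G + (1/2) ∂²_{yy} G + G · ∂_y G = 0. -/

import Mathlib

open MeasureTheory ProbabilityTheory Real Filter Set
open scoped ENNReal NNReal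

noncomputable section

/-- The Gaussian likelihood kernel `exp(u y - u^2 t / 2)`. -/
def gker (t y u : ℝ) : ℝ := Real.exp (u * y - u ^ 2 * t / 2)

/-- The Widder transform `F(t,y) = ∫ exp(u y - u² t/2) μ(du)` of the measure `μ`. -/
def Fw (μ : Measure ℝ) (t y : ℝ) : ℝ := ∫ u, gker t y u ∂μ

/-- The posterior-mean function `G(t,y)`. -/
def Gp (μ : Measure ℝ) (t y : ℝ) : ℝ := (∫ u, u * gker t y u ∂μ) / Fw μ t y

/-- The posterior-variance function `H(t,y)`. -/
def Hp (μ : Measure ℝ) (t y : ℝ) : ℝ :=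
  (∫ u, u ^ 2 * gker t y u ∂μ) / Fw μ t y - (Gp μ t y) ^ 2

/-- The (topological) support of a measure on `ℝ`. -/
def msupport (μ : Measure ℝ) : Set ℝ := {x | ∀ U ∈ nhds x, μ U ≠ 0}

/-- `I_μ`: the interior of the smallest closed interval containing the support of `μ`,
i.e. the open interval `(inf (supp μ), sup (supp μ))`. -/
def Imu (μ : Measure ℝ) : Set ℝ := interior (convexHull ℝ (msupport μ))

/-- The dispersion function in estimate coordinates: `Ψ(t,x) = H(t, G(t,·)⁻¹(x))`. -/
def Psi (μ : Measure ℝ) (t x : ℝ) : ℝ := Hp μ t (Function.invFun (Gp μ t) x)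

/-- The natural sigma-algebra generated by the observation process `Y` up to time `t`. -/
def natSigma {Ω : Type*} [MeasurableSpace Ω] (Y : ℝ → Ω → ℝ) (t : ℝ) : MeasurableSpace Ω :=
  ⨆ s ∈ Set.Icc (0 : ℝ) t, MeasurableSpace.comap (Y s) inferInstance

/-- The right-continuous augmentation `F^Y(t) = ⋂_{s > t} σ(Y_r, r ≤ s)`
of the filtration generated by `Y`. -/
def obsFiltration {Ω : Type*} [MeasurableSpace Ω] (Y : ℝ → Ω → ℝ) (t : ℝ) :
    MeasurableSpace Ω :=
  ⨅ s ∈ Set.Ioi t, natSigma Y s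

/-- A process `W` is a standard Brownian motion under the probability measure `P`:
it starts at `0`, has continuous paths, Gaussian increments `W t - W s ~ N(0, t - s)`,
and independent increments. -/
structure IsStdBM {Ω : Type*} [MeasurableSpace Ω] (P : Measure Ω) (W : ℝ → Ω → ℝ) : Prop where
  measurable : ∀ t : ℝ, Measurable (W t)
  init : ∀ ω, W 0 ω = 0
  cont : ∀ ω, Continuous fun t => W t ω
  incrLaw : ∀ ⦃s t : ℝ⦄, 0 ≤ s → s ≤ t →
    Measure.map (fun ω => W t ω - W s ω) P = gaussianReal 0 (Real.toNNReal (t - s))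
  indepIncr : ∀ (n : ℕ) (ts : Fin (n + 1) → ℝ), Monotone ts → 0 ≤ ts 0 →
    iIndepFun
      (fun (i : Fin n) ω => W (ts i.succ) ω - W (ts i.castSucc) ω) P

/-- A stopping time of the observation filtration `F^Y`:
`{τ ≤ t} ∈ F^Y(t)` for every `t`. -/
def IsObsStoppingTime {Ω : Type*} [MeasurableSpace Ω] (Y : ℝ → Ω → ℝ) (τ : Ω → ℝ) : Prop :=
  ∀ t : ℝ, MeasurableSet[obsFiltration Y t] {ω | τ ω ≤ t}

/-! The moments `M_k(t,y) = ∫ u^k exp(uy - u²t/2) μ(du)` are the `y`-derivatives `∂_y^k F` of the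
Widder transform, and `∂_t M_k = -M_{k+2}/2` (`F` solves the backward heat equation). Hence the
posterior moments `m_k = M_k / M_0` satisfy `∂_y m_k = m_{k+1} - m_k m_1` and
`∂_t m_k = -(m_{k+2} - m_k m_2)/2`. With `G = m_1` and `H = m_2 - m_1²` this gives `∂_y G = H`,
and Burgers' equation becomes a polynomial identity in `m_1, m_2, m_3`. Finally
`H = ∫ (u - G)² exp(uy - u²t/2) μ(du) / F`, which is positive unless `μ` is a Dirac mass. -/

open scoped Nat

def gkerMoment (μ : Measure ℝ) (k : ℕ) (t y : ℝ) : ℝ := ∫ u, u ^ k * gker t y u ∂μ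

def postMoment (μ : Measure ℝ) (k : ℕ) (t y : ℝ) : ℝ := gkerMoment μ k t y / gkerMoment μ 0 t y

lemma Fw_eq_gkerMoment (μ : Measure ℝ) (t y : ℝ) : Fw μ t y = gkerMoment μ 0 t y := by
  simp [Fw, gkerMoment]

lemma Gp_eq_postMoment (μ : Measure ℝ) (t y : ℝ) : Gp μ t y = postMoment μ 1 t y := by
  simp [Gp, postMoment, gkerMoment, Fw]

lemma Hp_eq_postMoment (μ : Measure ℝ) (t y : ℝ) :
    Hp μ t y = postMoment μ 2 t y - postMoment μ 1 t y ^ 2 := by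
  simp [Hp, Gp_eq_postMoment, postMoment, gkerMoment, Fw]

lemma gker_pos (t y u : ℝ) : 0 < gker t y u := exp_pos _

lemma continuous_pow_mul_gker (k : ℕ) (t y : ℝ) : Continuous fun u => u ^ k * gker t y u := by
  unfold gker; fun_prop

lemma mul_sub_sq_mul_div_two_le (a b : ℝ) {s : ℝ} (hs : 0 < s) :
    a * b - a ^ 2 * s / 2 ≤ b ^ 2 / (2 * s) := by
  rw [le_div_iff₀ (by positivity)]
  nlinarith [sq_nonneg (a * s - b)]

lemma norm_pow_mul_gker_le (k : ℕ) {s t y c : ℝ} (hs : 0 < s) (hst : s ≤ t) (hyc : |y| ≤ c)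
    (u : ℝ) : ‖u ^ k * gker t y u‖ ≤ k ! * exp ((c + 1) ^ 2 / (2 * s)) := by
  have hpow : |u| ^ k ≤ k ! * exp |u| := by
    have := pow_div_factorial_le_exp (x := |u|) (abs_nonneg u) k
    rwa [div_le_iff₀ (by positivity), mul_comm] at this
  have hexp : |u| + (u * y - u ^ 2 * t / 2) ≤ (c + 1) ^ 2 / (2 * s) := by
    have huy : u * y ≤ |u| * c :=
      (le_abs_self _).trans (by rw [abs_mul]; exact mul_le_mul_of_nonneg_left hyc (abs_nonneg u))
    have hts : u ^ 2 * s / 2 ≤ u ^ 2 * t / 2 := by gcongr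
    have := mul_sub_sq_mul_div_two_le |u| (c + 1) hs
    rw [sq_abs] at this
    linarith
  calc ‖u ^ k * gker t y u‖ = |u| ^ k * gker t y u := by
        rw [norm_mul, norm_pow, Real.norm_eq_abs, Real.norm_of_nonneg (gker_pos t y u).le]
    _ ≤ k ! * exp |u| * gker t y u := mul_le_mul_of_nonneg_right hpow (gker_pos t y u).le
    _ = k ! * exp (|u| + (u * y - u ^ 2 * t / 2)) := by rw [gker, exp_add]; ring
    _ ≤ k ! * exp ((c + 1) ^ 2 / (2 * s)) := by gcongr

lemma hasDerivAt_pow_mul_gker_y (k : ℕ) (t u y : ℝ) :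
    HasDerivAt (fun z => u ^ k * gker t z u) (u ^ (k + 1) * gker t y u) y :=
  ((((hasDerivAt_id y).const_mul u).sub_const (u ^ 2 * t / 2)).exp.const_mul (u ^ k)).congr_deriv
    (by simp only [gker, id, mul_one]; ring)

lemma hasDerivAt_pow_mul_gker_t (k : ℕ) (y u t : ℝ) :
    HasDerivAt (fun s => u ^ k * gker s y u) (-(u ^ (k + 2) * gker t y u) / 2) t := by
  have h := (((hasDerivAt_id t).const_mul (u ^ 2 / 2)).const_sub (u * y)).exp.const_mul (u ^ k)
  have hf : (fun s => u ^ k * gker s y u) = fun s => u ^ k * exp (u * y - u ^ 2 / 2 * id s) := by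
    ext s; simp only [gker, id]; ring_nf
  rw [hf]
  exact h.congr_deriv (by simp only [gker, id, mul_one]; ring_nf)

section FiniteMeasure

variable {μ : Measure ℝ} [IsFiniteMeasure μ] {t : ℝ}

lemma integrable_pow_mul_gker (k : ℕ) (ht : 0 < t) (y : ℝ) :
    Integrable (fun u => u ^ k * gker t y u) μ :=
  (integrable_const _).mono' (continuous_pow_mul_gker k t y).aestronglyMeasurable
    (.of_forall (norm_pow_mul_gker_le k ht le_rfl le_rfl))

lemma hasDerivAt_gkerMoment_y (k : ℕ) (ht : 0 < t) (y : ℝ) :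
    HasDerivAt (fun z => gkerMoment μ k t z) (gkerMoment μ (k + 1) t y) y := by
  refine (hasDerivAt_integral_of_dominated_loc_of_deriv_le (Metric.ball_mem_nhds y one_pos)
    (.of_forall fun z => (continuous_pow_mul_gker k t z).aestronglyMeasurable)
    (integrable_pow_mul_gker k ht y)
    (continuous_pow_mul_gker (k + 1) t y).aestronglyMeasurable
    (.of_forall fun u z hz => norm_pow_mul_gker_le (k + 1) (c := |y| + 1) ht le_rfl ?_ u)
    (integrable_const _) (.of_forall fun u z _ => hasDerivAt_pow_mul_gker_y k t u z)).2
  rw [Metric.mem_ball, Real.dist_eq] at hz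
  linarith [abs_sub_abs_le_abs_sub z y]

lemma hasDerivAt_gkerMoment_t (k : ℕ) (ht : 0 < t) (y : ℝ) :
    HasDerivAt (fun s => gkerMoment μ k s y) (-gkerMoment μ (k + 2) t y / 2) t := by
  have h := (hasDerivAt_integral_of_dominated_loc_of_deriv_le (μ := μ)
    (bound := fun _ => (k + 2)! * exp ((|y| + 1) ^ 2 / (2 * (t / 2))))
    (Metric.ball_mem_nhds t (half_pos ht))
    (.of_forall fun s => (continuous_pow_mul_gker k s y).aestronglyMeasurable)
    (integrable_pow_mul_gker k ht y)
    ((continuous_pow_mul_gker (k + 2) t y).neg.div_const 2).aestronglyMeasurable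
    (.of_forall fun u s hs => ?_)
    (integrable_const _) (.of_forall fun u s _ => hasDerivAt_pow_mul_gker_t k y u s)).2
  · rwa [integral_div, integral_neg] at h
  · rw [Metric.mem_ball, Real.dist_eq, abs_sub_lt_iff] at hs
    calc ‖-(u ^ (k + 2) * gker s y u) / 2‖ ≤ ‖u ^ (k + 2) * gker s y u‖ := by
          rw [norm_div, norm_neg, Real.norm_two]
          linarith [norm_nonneg (u ^ (k + 2) * gker s y u)]
      _ ≤ (k + 2)! * exp ((|y| + 1) ^ 2 / (2 * (t / 2))) :=
          norm_pow_mul_gker_le (k + 2) (half_pos ht) (by linarith) le_rfl u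

lemma sq_sub_mul_gker_eq (t y c u : ℝ) : (u - c) ^ 2 * gker t y u =
    u ^ 2 * gker t y u - 2 * c * (u ^ 1 * gker t y u) + c ^ 2 * (u ^ 0 * gker t y u) := by
  ring

lemma integrable_sq_sub_mul_gker (ht : 0 < t) (y c : ℝ) :
    Integrable (fun u => (u - c) ^ 2 * gker t y u) μ := by
  simp_rw [sq_sub_mul_gker_eq]
  exact ((integrable_pow_mul_gker 2 ht y).sub ((integrable_pow_mul_gker 1 ht y).const_mul _)).add
    ((integrable_pow_mul_gker 0 ht y).const_mul _)

lemma integral_sq_sub_mul_gker (ht : 0 < t) (y c : ℝ) :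
    ∫ u, (u - c) ^ 2 * gker t y u ∂μ =
      gkerMoment μ 2 t y - 2 * c * gkerMoment μ 1 t y + c ^ 2 * gkerMoment μ 0 t y := by
  have h2 := integrable_pow_mul_gker (μ := μ) 2 ht y
  have h1 := (integrable_pow_mul_gker (μ := μ) 1 ht y).const_mul (2 * c)
  have h0 := (integrable_pow_mul_gker (μ := μ) 0 ht y).const_mul (c ^ 2)
  have h21 : Integrable (fun u => u ^ 2 * gker t y u - 2 * c * (u ^ 1 * gker t y u)) μ :=
    h2.sub h1
  simp_rw [sq_sub_mul_gker_eq]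
  rw [integral_add h21 h0, integral_sub h2 h1, integral_const_mul, integral_const_mul]
  rfl

variable [NeZero μ]

lemma gkerMoment_zero_pos (ht : 0 < t) (y : ℝ) : 0 < gkerMoment μ 0 t y := by
  have hsupp : Function.support (fun u => u ^ 0 * gker t y u) = univ := by
    ext u; simp [(gker_pos t y u).ne']
  rw [gkerMoment, integral_pos_iff_support_of_nonneg _ (integrable_pow_mul_gker 0 ht y), hsupp]
  · exact pos_iff_ne_zero.2 (NeZero.ne (μ univ))
  · intro u; simpa using (gker_pos t y u).le

lemma hasDerivAt_postMoment_y (k : ℕ) (ht : 0 < t) (y : ℝ) :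
    HasDerivAt (fun z => postMoment μ k t z)
      (postMoment μ (k + 1) t y - postMoment μ k t y * postMoment μ 1 t y) y := by
  have hM0 := (gkerMoment_zero_pos (μ := μ) ht y).ne'
  refine ((hasDerivAt_gkerMoment_y k ht y).div (hasDerivAt_gkerMoment_y 0 ht y) hM0).congr_deriv ?_
  simp only [postMoment]
  field_simp

lemma hasDerivAt_postMoment_t (k : ℕ) (ht : 0 < t) (y : ℝ) :
    HasDerivAt (fun s => postMoment μ k s y)
      (-(postMoment μ (k + 2) t y - postMoment μ k t y * postMoment μ 2 t y) / 2) t := by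
  have hM0 := (gkerMoment_zero_pos (μ := μ) ht y).ne'
  refine ((hasDerivAt_gkerMoment_t k ht y).div (hasDerivAt_gkerMoment_t 0 ht y) hM0).congr_deriv ?_
  simp only [postMoment]
  field_simp
  ring

lemma hasDerivAt_Gp_y (ht : 0 < t) (y : ℝ) : HasDerivAt (Gp μ t) (Hp μ t y) y := by
  rw [funext (Gp_eq_postMoment μ t), Hp_eq_postMoment]
  exact (hasDerivAt_postMoment_y 1 ht y).congr_deriv (by ring)

lemma deriv_Gp_y (ht : 0 < t) : deriv (Gp μ t) = Hp μ t :=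
  funext fun y => (hasDerivAt_Gp_y ht y).deriv

lemma hasDerivAt_Gp_t (ht : 0 < t) (y : ℝ) :
    HasDerivAt (fun s => Gp μ s y)
      (-(postMoment μ 3 t y - postMoment μ 1 t y * postMoment μ 2 t y) / 2) t := by
  simpa only [Gp_eq_postMoment] using hasDerivAt_postMoment_t 1 ht y

lemma hasDerivAt_Hp_y (ht : 0 < t) (y : ℝ) :
    HasDerivAt (Hp μ t) (postMoment μ 3 t y - postMoment μ 2 t y * postMoment μ 1 t y -
      2 * postMoment μ 1 t y * (postMoment μ 2 t y - postMoment μ 1 t y * postMoment μ 1 t y))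
      y := by
  rw [funext (Hp_eq_postMoment μ t)]
  exact ((hasDerivAt_postMoment_y 2 ht y).sub ((hasDerivAt_postMoment_y 1 ht y).pow 2)).congr_deriv
    (by norm_num)

lemma Hp_eq_integral_sq_sub_Gp_mul_gker_div (ht : 0 < t) (y : ℝ) :
    Hp μ t y = (∫ u, (u - Gp μ t y) ^ 2 * gker t y u ∂μ) / Fw μ t y := by
  have hM0 := (gkerMoment_zero_pos (μ := μ) ht y).ne'
  rw [integral_sq_sub_mul_gker ht, Fw_eq_gkerMoment, Hp_eq_postMoment, Gp_eq_postMoment]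
  simp only [postMoment]
  field_simp
  ring

end FiniteMeasure

lemma measure_compl_singleton_ne_zero {μ : Measure ℝ}
    (htwo : ∃ a b : ℝ, a ∈ msupport μ ∧ b ∈ msupport μ ∧ a ≠ b) (c : ℝ) : μ {c}ᶜ ≠ 0 := by
  obtain ⟨a, b, ha, hb, hab⟩ := htwo
  rcases eq_or_ne a c with rfl | hac
  · exact hb _ (isOpen_compl_singleton.mem_nhds hab.symm)
  · exact ha _ (isOpen_compl_singleton.mem_nhds hac)

lemma integral_sq_sub_mul_gker_pos {μ : Measure ℝ} [IsFiniteMeasure μ]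
    (htwo : ∃ a b : ℝ, a ∈ msupport μ ∧ b ∈ msupport μ ∧ a ≠ b) {t : ℝ} (ht : 0 < t) (y c : ℝ) :
    0 < ∫ u, (u - c) ^ 2 * gker t y u ∂μ := by
  have hsupp : Function.support (fun u => (u - c) ^ 2 * gker t y u) = {c}ᶜ := by
    ext u; simp [(gker_pos t y u).ne', sub_eq_zero]
  rw [integral_pos_iff_support_of_nonneg (fun u => mul_nonneg (sq_nonneg _) (gker_pos t y u).le)
    (integrable_sq_sub_mul_gker ht y c), hsupp]
  exact pos_iff_ne_zero.2 (measure_compl_singleton_ne_zero htwo c)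

lemma Hp_pos {μ : Measure ℝ} [IsFiniteMeasure μ] [NeZero μ]
    (htwo : ∃ a b : ℝ, a ∈ msupport μ ∧ b ∈ msupport μ ∧ a ≠ b) {t : ℝ} (ht : 0 < t) (y : ℝ) :
    0 < Hp μ t y := by
  rw [Hp_eq_integral_sq_sub_Gp_mul_gker_div ht]
  exact div_pos (integral_sq_sub_mul_gker_pos htwo ht y _)
    (Fw_eq_gkerMoment μ t y ▸ gkerMoment_zero_pos ht y)

theorem posterior_mean_burgers_general
    (μ : Measure ℝ) [IsProbabilityMeasure μ]
    (htwo : ∃ a b : ℝ, a ∈ msupport μ ∧ b ∈ msupport μ ∧ a ≠ b)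
    (t : ℝ) (ht : 0 < t) (y : ℝ) :
    HasDerivAt (fun z => Gp μ t z) (Hp μ t y) y ∧ 0 < Hp μ t y ∧
      deriv (fun s => Gp μ s y) t + (1 / 2) * iteratedDeriv 2 (fun z => Gp μ t z) y +
        Gp μ t y * deriv (fun z => Gp μ t z) y = 0 := by
  refine ⟨hasDerivAt_Gp_y ht y, Hp_pos htwo ht y, ?_⟩
  rw [iteratedDeriv_succ, iteratedDeriv_one, deriv_Gp_y ht, (hasDerivAt_Gp_t ht y).deriv,
    (hasDerivAt_Hp_y ht y).deriv, Gp_eq_postMoment, Hp_eq_postMoment]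
  ring

/-- on `(0,∞) × ℝ`, the posterior variance `H` is the spatial derivative of
the posterior mean `G`; `H > 0`; and `G` solves the backwards Burgers equation
`∂_t G + (1/2) ∂²_{yy} G + G ∂_y G = 0`. -/
theorem posterior_mean_burgers
    (μ : Measure ℝ) [IsProbabilityMeasure μ] (hμ2 : Integrable (fun u => u ^ 2) μ)
    (htwo : ∃ a b : ℝ, a ∈ msupport μ ∧ b ∈ msupport μ ∧ a ≠ b)
    (t : ℝ) (ht : 0 < t) (y : ℝ) :
    HasDerivAt (fun z => Gp μ t z) (Hp μ t y) y ∧ 0 < Hp μ t y ∧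
      deriv (fun s => Gp μ s y) t + (1 / 2) * iteratedDeriv 2 (fun z => Gp μ t z) y +
        Gp μ t y * deriv (fun z => Gp μ t z) y = 0 :=
  posterior_mean_burgers_general μ htwo t ht y
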